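/- arXiv:1901.08716 — 5 statements merged into one kernel-verified Lean document; each statement's English description precedes it below -/
import Mathlib

section
/- For every 0 ≤ i ≤ k−1 and 0 ≤ j ≤ s−1, the rational function Z_{ij} = − ∏_{ℓ=0, ℓ≠j}^{s−1} (X^{s+i} − X^ℓ)/(X^j − X^ℓ) is a polynomial in X with integer coefficients; that is, there exists P ∈ ℤ[X] whose image in ℝ(X) equals Z_{ij}. -/
/-!
Split the product at `ℓ = j` and pull out powers of `X`. With `r = s - 1 - j`, the factors
`ℓ < j` contribute the Gaussian binomial `[s + i choose j]_X`, and the factors `j < ℓ < s`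
contribute `±X^e [s - 1 - j + i choose r]_X`. Gaussian binomials lie in `ℤ[X]`, because they
satisfy the `q`-Pascal recurrence.
-/

open Polynomial Finset

/-- The image of an integer polynomial in the field ℝ(X) of rational functions. -/
noncomputable def intPolyToRatFunc (P : Polynomial ℤ) : RatFunc ℝ :=
  algebraMap (Polynomial ℝ) (RatFunc ℝ) (P.map (Int.castRingHom ℝ))

section

variable {R : Type*} [CommRing R]

/-- `qChoose a b` is the Gaussian binomial coefficient `[a + b choose b]` in the variable `X`. -/
noncomputable def qChoose : ℕ → ℕ → R[X]
  | _, 0 => 1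
  | 0, _ + 1 => 1
  | a + 1, b + 1 => qChoose (a + 1) b + X ^ (b + 1) * qChoose a (b + 1)
termination_by a b => a + b

theorem qChoose_mul_prod_range : ∀ a b : ℕ,
    (qChoose a b : R[X]) * ∏ t ∈ range b, (X ^ (t + 1) - 1)
      = ∏ t ∈ range b, (X ^ (a + t + 1) - 1)
  | _, 0 => by simp [qChoose]
  | 0, b + 1 => by simp [qChoose]
  | a + 1, b + 1 => by
    have shift : ∏ t ∈ range (b + 1), ((X : R[X]) ^ (a + t + 1) - 1)
        = (∏ t ∈ range b, (X ^ (a + 1 + t + 1) - 1)) * (X ^ (a + 1) - 1) := by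
      rw [prod_range_succ']
      congr 1
      refine prod_congr rfl fun t _ => ?_
      ring_nf
    rw [qChoose, add_mul, mul_assoc (X ^ (b + 1)), qChoose_mul_prod_range a (b + 1), shift,
      prod_range_succ (fun t => (X : R[X]) ^ (t + 1) - 1), ← mul_assoc,
      qChoose_mul_prod_range (a + 1) b, prod_range_succ]
    ring
termination_by a b => a + b

theorem prod_range_X_pow_sub_X_pow (a b : ℕ) :
    ∏ t ∈ range b, ((X : R[X]) ^ (a + b) - X ^ t)
      = X ^ (∑ t ∈ range b, t) * ∏ t ∈ range b, (X ^ (a + t + 1) - 1) := by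
  induction b with
  | zero => simp
  | succ b ih =>
    have factor : ∏ t ∈ range b, ((X : R[X]) ^ (a + (b + 1)) - X ^ (t + 1))
        = X ^ b * ∏ t ∈ range b, (X ^ (a + b) - X ^ t) := by
      calc ∏ t ∈ range b, ((X : R[X]) ^ (a + (b + 1)) - X ^ (t + 1))
          = ∏ t ∈ range b, (X * (X ^ (a + b) - X ^ t)) := prod_congr rfl fun t _ => by ring
        _ = X ^ b * ∏ t ∈ range b, (X ^ (a + b) - X ^ t) := by
          rw [prod_mul_distrib, prod_const, card_range]
    rw [prod_range_succ', factor, ih, prod_range_succ, sum_range_succ]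
    ring

theorem prod_range_erase_eq_mul {M : Type*} [CommMonoid M] (f : ℕ → M) (j r : ℕ) :
    ∏ ℓ ∈ (range (j + 1 + r)).erase j, f ℓ
      = (∏ ℓ ∈ range j, f ℓ) * ∏ t ∈ range r, f (j + 1 + t) := by
  have hupdate : ∏ ℓ ∈ (range (j + 1 + r)).erase j, f ℓ
      = ∏ ℓ ∈ (range (j + 1 + r)).erase j, Function.update f j 1 ℓ :=
    prod_congr rfl fun ℓ hℓ => (Function.update_of_ne (ne_of_mem_erase hℓ) _ _).symm
  rw [hupdate, prod_erase _ (Function.update_self j 1 f), prod_range_add, prod_range_succ,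
    Function.update_self, mul_one]
  congr 1 <;> refine prod_congr rfl fun t ht => Function.update_of_ne ?_ _ _
  · exact (mem_range.1 ht).ne
  · omega

theorem prod_range_erase_X_pow_sub_X_pow (i j r : ℕ) :
    ∏ ℓ ∈ (range (j + 1 + r)).erase j, ((X : R[X]) ^ (j + 1 + r + i) - X ^ ℓ)
      = (-1) ^ r * X ^ (r + ∑ t ∈ range r, t) * qChoose (i + r + 1) j * qChoose i r
        * ∏ ℓ ∈ (range (j + 1 + r)).erase j, ((X : R[X]) ^ j - X ^ ℓ) := by
  have lowerNum : ∏ ℓ ∈ range j, ((X : R[X]) ^ (j + 1 + r + i) - X ^ ℓ)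
      = X ^ (∑ t ∈ range j, t)
        * (qChoose (i + r + 1) j * ∏ t ∈ range j, (X ^ (t + 1) - 1)) := by
    rw [qChoose_mul_prod_range, show j + 1 + r + i = (i + r + 1) + j by ring,
      prod_range_X_pow_sub_X_pow]
  have lowerDen : ∏ ℓ ∈ range j, ((X : R[X]) ^ j - X ^ ℓ)
      = X ^ (∑ t ∈ range j, t) * ∏ t ∈ range j, (X ^ (t + 1) - 1) := by
    simpa using prod_range_X_pow_sub_X_pow (R := R) 0 j
  have upperNum : ∏ t ∈ range r, ((X : R[X]) ^ (j + 1 + r + i) - X ^ (j + 1 + t))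
      = (X ^ (j + 1)) ^ r * X ^ (∑ t ∈ range r, t)
        * (qChoose i r * ∏ t ∈ range r, (X ^ (t + 1) - 1)) :=
    calc ∏ t ∈ range r, ((X : R[X]) ^ (j + 1 + r + i) - X ^ (j + 1 + t))
        = ∏ t ∈ range r, (X ^ (j + 1) * (X ^ (i + r) - X ^ t)) :=
          prod_congr rfl fun t _ => by ring
      _ = _ := by
        rw [prod_mul_distrib, prod_const, card_range, prod_range_X_pow_sub_X_pow,
          qChoose_mul_prod_range, mul_assoc]
  have upperDen : ∏ t ∈ range r, ((X : R[X]) ^ j - X ^ (j + 1 + t))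
      = (-X ^ j) ^ r * ∏ t ∈ range r, (X ^ (t + 1) - 1) :=
    calc ∏ t ∈ range r, ((X : R[X]) ^ j - X ^ (j + 1 + t))
        = ∏ t ∈ range r, (-X ^ j * (X ^ (t + 1) - 1)) := prod_congr rfl fun t _ => by ring
      _ = _ := by rw [prod_mul_distrib, prod_const, card_range]
  have sign : (-1 : R[X]) ^ r * (-X ^ j) ^ r = (X ^ j) ^ r := by
    rw [← mul_pow, neg_one_mul, neg_neg]
  rw [prod_range_erase_eq_mul, prod_range_erase_eq_mul, lowerNum, lowerDen, upperNum, upperDen]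
  linear_combination (-(X ^ (r + ∑ t ∈ range r, t) * qChoose (i + r + 1) j * qChoose i r
    * X ^ (∑ t ∈ range j, t) * (∏ t ∈ range j, ((X : R[X]) ^ (t + 1) - 1))
    * ∏ t ∈ range r, ((X : R[X]) ^ (t + 1) - 1))) * sign

end

theorem cp_generator_entry_is_integer_polynomial_general
    (s : ℕ) (hs : 1 ≤ s) (i j : ℕ) (hj : j ≤ s - 1) :
    ∃ P : Polynomial ℤ,
      intPolyToRatFunc P =
        - ∏ ℓ ∈ (Finset.range s).erase j,
            (((RatFunc.X : RatFunc ℝ) ^ (s + i) - RatFunc.X ^ ℓ) /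
              ((RatFunc.X : RatFunc ℝ) ^ j - RatFunc.X ^ ℓ)) := by
  obtain ⟨r, rfl⟩ : ∃ r, s = j + 1 + r := ⟨s - 1 - j, by omega⟩
  refine ⟨-((-1) ^ r * X ^ (r + ∑ t ∈ range r, t) * qChoose (i + r + 1) j * qChoose i r),
    ?_⟩
  have hden : ∀ ℓ ∈ (range (j + 1 + r)).erase j,
      (RatFunc.X : RatFunc ℝ) ^ j - RatFunc.X ^ ℓ ≠ 0 := by
    intro ℓ hℓ h
    rw [sub_eq_zero, ← RatFunc.algebraMap_X, ← map_pow, ← map_pow,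
      (RatFunc.algebraMap_injective ℝ).eq_iff] at h
    simpa [(ne_of_mem_erase hℓ).symm] using congrArg natDegree h
  rw [prod_div_distrib, ← neg_div, eq_div_iff (prod_ne_zero_iff.2 hden)]
  simpa [intPolyToRatFunc, Polynomial.map_prod] using
    (congrArg intPolyToRatFunc (prod_range_erase_X_pow_sub_X_pow i j r)).symm

/-- Each entry `Z i j = - ∏_{ℓ ≠ j} (X^(s+i) - X^ℓ)/(X^j - X^ℓ)` of the systematic generator
matrix of the `CP(n,k)` code (with `s = n - k`) is a polynomial with integer coefficients. -/
theorem cp_generator_entry_is_integer_polynomial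
    (s k : ℕ) (hs : 1 ≤ s) (hk : 1 ≤ k) (i j : ℕ) (hi : i ≤ k - 1) (hj : j ≤ s - 1) :
    ∃ P : Polynomial ℤ,
      intPolyToRatFunc P =
        - ∏ ℓ ∈ (Finset.range s).erase j,
            (((RatFunc.X : RatFunc ℝ) ^ (s + i) - RatFunc.X ^ ℓ) /
              ((RatFunc.X : RatFunc ℝ) ^ j - RatFunc.X ^ ℓ)) :=
  cp_generator_entry_is_integer_polynomial_general s hs i j hj
end

section
/- When s = 3, for every 0 ≤ i ≤ k−1 and j ∈ {0,1,2}, the rational function Z_{ij} = − ∏_{ℓ=0, ℓ≠j}^{2} (X^{3+i} − X^ℓ)/(X^j − X^ℓ) equals a polynomial P ∈ ℤ[X] each of whose coefficients has absolute value at most k. -/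
/-!
Put `n = 3 + i` and `[a]_X = (X^a - 1)/(X - 1)`. Cancelling common factors, `-Z i 0 = X^3 [n-1 choose 2]_X`,
`-Z i 2 = [n choose 2]_X` and `Z i 1 = X [n]_X [n-2]_X`, where `[a+1 choose 2]_X = [a+1]_X [a]_X / [2]_X`.
One of the consecutive exponents `a, a+1` is even, say `2c`, and `[2c]_X / [2]_X = ∑_{u<c} X^(2u)`.
So every entry is, up to sign and a power of `X`, a sum of `c` monomials times a geometric sum, whose
coefficients are bounded by `c` in absolute value; here `c ≤ (i + 3) / 2 ≤ k`, resp. `c = i + 1 ≤ k`.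
-/

open Polynomial Finset

theorem intPolyToRatFunc_eq_eval₂ (P : ℤ[X]) :
    intPolyToRatFunc P = P.eval₂ (Int.castRingHom _) RatFunc.X := by
  rw [intPolyToRatFunc, ← RatFunc.algebraMap_X, Polynomial.map, hom_eval₂]
  congr 1
  exact RingHom.ext_int _ _

theorem RatFunc.X_ne_C (c : ℝ) : (RatFunc.X : RatFunc ℝ) ≠ RatFunc.C c := by
  rw [← RatFunc.algebraMap_X, ← RatFunc.algebraMap_C]
  exact (RatFunc.algebraMap_injective ℝ).ne (Polynomial.X_ne_C c)

theorem abs_coeff_X_pow_mul_le {p : ℤ[X]} {c : ℤ} (hc : 0 ≤ c) (hp : ∀ m, |p.coeff m| ≤ c)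
    (d m : ℕ) : |(X ^ d * p).coeff m| ≤ c := by
  rw [coeff_X_pow_mul']
  split_ifs
  · exact hp _
  · simpa using hc

theorem abs_coeff_geom_sum_le_one (a m : ℕ) : |(∑ t ∈ range a, (X : ℤ[X]) ^ t).coeff m| ≤ 1 := by
  simp only [finsetSum_coeff, coeff_X_pow, Finset.sum_ite_eq, mem_range]
  split_ifs <;> simp

theorem abs_coeff_sum_X_pow_mul_geom_sum_le (f : ℕ → ℕ) (b a m : ℕ) :
    |((∑ u ∈ range b, (X : ℤ[X]) ^ f u) * ∑ t ∈ range a, X ^ t).coeff m| ≤ (b : ℤ) := by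
  rw [Finset.sum_mul, finsetSum_coeff]
  refine (abs_sum_le_sum_abs _ _).trans ?_
  refine (Finset.sum_le_card_nsmul _ _ 1 fun u _ =>
    abs_coeff_X_pow_mul_le zero_le_one (abs_coeff_geom_sum_le_one a) _ _).trans ?_
  simp

/-- The Gaussian binomial `[n+1 choose 2]_X = (X^(n+1) - 1)(X^n - 1) / ((X^2 - 1)(X - 1))`, written
as `(X^(2c) - 1)/(X^2 - 1) * (X^a - 1)/(X - 1)` with `{2c, a} = {n, n+1}`. -/
noncomputable def qBinomTwo (n : ℕ) : ℤ[X] :=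
  (∑ u ∈ range ((n + 1) / 2), X ^ (2 * u)) * ∑ t ∈ range (2 * n + 1 - 2 * ((n + 1) / 2)), X ^ t

theorem abs_coeff_qBinomTwo_le (n m : ℕ) : |(qBinomTwo n).coeff m| ≤ ((n + 1) / 2 : ℕ) :=
  abs_coeff_sum_X_pow_mul_geom_sum_le _ _ _ _

theorem eval₂_qBinomTwo_mul {R : Type*} [CommRing R] (x : R) (n : ℕ) :
    (qBinomTwo n).eval₂ (Int.castRingHom R) x * ((x ^ 2 - 1) * (x - 1))
      = (x ^ (n + 1) - 1) * (x ^ n - 1) := by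
  have hsq (c : ℕ) : (∑ u ∈ range c, x ^ (2 * u)) * (x ^ 2 - 1) = x ^ (2 * c) - 1 := by
    simp only [pow_mul, geom_sum_mul]
  simp only [qBinomTwo, eval₂_mul, eval₂_finsetSum, eval₂_X_pow]
  rcases Nat.even_or_odd' n with ⟨m, rfl | rfl⟩
  · rw [show (2 * m + 1) / 2 = m by omega, show 2 * (2 * m) + 1 - 2 * m = 2 * m + 1 by omega]
    linear_combination (∑ t ∈ range (2 * m + 1), x ^ t) * (x - 1) * hsq m
      + (x ^ (2 * m) - 1) * geom_sum_mul x (2 * m + 1)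
  · rw [show (2 * m + 1 + 1) / 2 = m + 1 by omega,
      show 2 * (2 * m + 1) + 1 - 2 * (m + 1) = 2 * m + 1 by omega]
    linear_combination (∑ t ∈ range (2 * m + 1), x ^ t) * (x - 1) * hsq (m + 1)
      + (x ^ (2 * m + 2) - 1) * geom_sum_mul x (2 * m + 1)

section Entries

variable {K : Type*} [Field K] {x : K}

theorem neg_prod_erase_zero_eq_eval₂ (h2 : x ^ 2 ≠ 1) (i : ℕ) :
    -∏ ℓ ∈ (range 3).erase 0, (x ^ (3 + i) - x ^ ℓ) / (x ^ 0 - x ^ ℓ)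
      = (-(X ^ 3 * qBinomTwo (i + 1))).eval₂ (Int.castRingHom K) x := by
  have h01 : x ^ 0 - x ^ 1 ≠ 0 :=
    sub_ne_zero.2 fun h => h2 (by simp [show x = 1 by simpa [eq_comm] using h])
  have h02 : x ^ 0 - x ^ 2 ≠ 0 := sub_ne_zero.2 (by simpa [eq_comm] using h2)
  rw [show (range 3).erase 0 = {1, 2} by decide, prod_pair (by norm_num), div_mul_div_comm,
    ← neg_div, div_eq_iff (mul_ne_zero h01 h02)]
  simp only [eval₂_neg, eval₂_mul, eval₂_X_pow]
  linear_combination x ^ 3 * eval₂_qBinomTwo_mul x (i + 1)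

theorem neg_prod_erase_one_eq_eval₂ (h0 : x ≠ 0) (h1 : x ≠ 1) (i : ℕ) :
    -∏ ℓ ∈ (range 3).erase 1, (x ^ (3 + i) - x ^ ℓ) / (x ^ 1 - x ^ ℓ)
      = (X * ((∑ u ∈ range (i + 1), X ^ u) * ∑ t ∈ range (i + 3), X ^ t)).eval₂
          (Int.castRingHom K) x := by
  have h10 : x ^ 1 - x ^ 0 ≠ 0 := sub_ne_zero.2 (by simpa using h1)
  have h12 : x ^ 1 - x ^ 2 ≠ 0 := by
    rw [show x ^ 1 - x ^ 2 = -x * (x - 1) by ring]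
    exact mul_ne_zero (neg_ne_zero.2 h0) (sub_ne_zero.2 h1)
  rw [show (range 3).erase 1 = {0, 2} by decide, prod_pair (by norm_num), div_mul_div_comm,
    ← neg_div, div_eq_iff (mul_ne_zero h10 h12)]
  simp only [eval₂_mul, eval₂_finsetSum, eval₂_X_pow, eval₂_X]
  linear_combination x ^ 2 * (∑ t ∈ range (i + 3), x ^ t) * (x - 1) * geom_sum_mul x (i + 1)
    + x ^ 2 * (x ^ (i + 1) - 1) * geom_sum_mul x (i + 3)

theorem neg_prod_erase_two_eq_eval₂ (h0 : x ≠ 0) (h2 : x ^ 2 ≠ 1) (i : ℕ) :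
    -∏ ℓ ∈ (range 3).erase 2, (x ^ (3 + i) - x ^ ℓ) / (x ^ 2 - x ^ ℓ)
      = (-qBinomTwo (i + 2)).eval₂ (Int.castRingHom K) x := by
  have h20 : x ^ 2 - x ^ 0 ≠ 0 := sub_ne_zero.2 (by simpa using h2)
  have h21 : x ^ 2 - x ^ 1 ≠ 0 := by
    rw [show x ^ 2 - x ^ 1 = x * (x - 1) by ring]
    exact mul_ne_zero h0 (sub_ne_zero.2 fun h => h2 (by simp [h]))
  rw [show (range 3).erase 2 = {0, 1} by decide, prod_pair (by norm_num), div_mul_div_comm,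
    ← neg_div, div_eq_iff (mul_ne_zero h20 h21)]
  simp only [eval₂_neg]
  linear_combination x * eval₂_qBinomTwo_mul x (i + 2)

end Entries

/-- For `s = 3`, each generator entry `Z i j = - ∏_{ℓ ≠ j, ℓ < 3} (X^(3+i) - X^ℓ)/(X^j - X^ℓ)`
equals a polynomial with integer coefficients of absolute value at most `k`. -/
theorem cp_generator_entry_coeffs_s_three
    (k : ℕ) (hk : 1 ≤ k) (i j : ℕ) (hi : i ≤ k - 1) (hj : j ≤ 2) :
    ∃ P : Polynomial ℤ,
      (∀ m : ℕ, |P.coeff m| ≤ (k : ℤ)) ∧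
      intPolyToRatFunc P =
        - ∏ ℓ ∈ (Finset.range 3).erase j,
            (((RatFunc.X : RatFunc ℝ) ^ (3 + i) - RatFunc.X ^ ℓ) /
              ((RatFunc.X : RatFunc ℝ) ^ j - RatFunc.X ^ ℓ)) := by
  have h0 : (RatFunc.X : RatFunc ℝ) ≠ 0 := RatFunc.X_ne_zero
  have h1 : (RatFunc.X : RatFunc ℝ) ≠ 1 := by simpa using RatFunc.X_ne_C 1
  have h2 : (RatFunc.X : RatFunc ℝ) ^ 2 ≠ 1 := by
    simpa [sq_eq_one_iff, not_or] using ⟨h1, by simpa using RatFunc.X_ne_C (-1)⟩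
  have hk' {c : ℕ} (hc : c ≤ k) : (c : ℤ) ≤ k := by exact_mod_cast hc
  simp_rw [intPolyToRatFunc_eq_eval₂]
  interval_cases j
  · refine ⟨_, fun m => ?_, (neg_prod_erase_zero_eq_eval₂ h2 i).symm⟩
    rw [coeff_neg, abs_neg]
    exact abs_coeff_X_pow_mul_le (by positivity)
      (fun m => (abs_coeff_qBinomTwo_le _ m).trans (hk' (by omega))) _ _
  · refine ⟨_, fun m => ?_, (neg_prod_erase_one_eq_eval₂ h0 h1 i).symm⟩
    simpa using abs_coeff_X_pow_mul_le (by positivity)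
      (fun m => (abs_coeff_sum_X_pow_mul_geom_sum_le (fun u => u) (i + 1) (i + 3) m).trans
        (hk' (by omega))) 1 m
  · refine ⟨_, fun m => ?_, (neg_prod_erase_two_eq_eval₂ h0 h2 i).symm⟩
    rw [coeff_neg, abs_neg]
    exact (abs_coeff_qBinomTwo_le _ m).trans (hk' (by omega))
end

section
/- Let s ≥ 1, let 0 ≤ m ≤ s−1, and let t be any natural number. Then in the field ℝ(X) of rational functions the identity ∑_{j=0}^{s−1} X^{m j} · ∏_{ℓ=0, ℓ≠j}^{s−1} (X^{t} − X^{ℓ})/(X^{j} − X^{ℓ}) = X^{m t} holds. In particular, with Z_{ij} = − ∏_{ℓ≠j} (X^{s+i} − X^{ℓ})/(X^{j} − X^{ℓ}), one has ∑_{j=0}^{s−1} Z_{ij} X^{m j} + X^{m(s+i)} = 0 for all 0 ≤ m ≤ s−1 and all i ≥ 0, i.e., the systematic generator matrix G_{n,k}(X) = [Z I_k] satisfies G_{n,k}(X) H_{n,k}(X)^T = 0. -/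
/-! The sum is the Lagrange interpolant of `Y ↦ Y ^ m` at the distinct nodes `X ^ 0, …, X ^ (s - 1)`,
evaluated at `X ^ t`; since `deg Y ^ m < s`, that interpolant is `Y ^ m` itself. -/

open Finset Polynomial

namespace Lagrange

variable {F ι : Type*} [Field F] [DecidableEq ι] {s : Finset ι} {v : ι → F}

theorem eval_basis (x : F) (i : ι) :
    (Lagrange.basis s v i).eval x = ∏ j ∈ s.erase i, (x - v j) / (v i - v j) := by
  simp only [Lagrange.basis, basisDivisor, eval_prod, eval_mul, eval_C, eval_sub, eval_X,
    div_eq_inv_mul]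

theorem sum_eval_mul_prod_div_eq_eval {f : F[X]} (hvs : Set.InjOn v s) (hf : f.degree < #s)
    (x : F) :
    ∑ i ∈ s, f.eval (v i) * ∏ j ∈ s.erase i, (x - v j) / (v i - v j) = f.eval x := by
  conv_rhs => rw [eq_interpolate hvs hf, interpolate_apply]
  simp only [eval_finsetSum, eval_mul, eval_C, eval_basis]

theorem sum_pow_mul_prod_div_eq_pow {m : ℕ} (hvs : Set.InjOn v s) (hm : m < #s) (x : F) :
    ∑ i ∈ s, v i ^ m * ∏ j ∈ s.erase i, (x - v j) / (v i - v j) = x ^ m := by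
  have hdeg : (X ^ m : F[X]).degree < #s := by
    rw [degree_X_pow]
    exact_mod_cast hm
  simpa only [eval_pow, eval_X] using sum_eval_mul_prod_div_eq_eval hvs hdeg x

end Lagrange

theorem RatFunc.X_pow_injective (K : Type*) [Field K] :
    Function.Injective fun n : ℕ => (RatFunc.X : RatFunc K) ^ n := by
  intro a b h
  simp only [← RatFunc.algebraMap_X, ← map_pow] at h
  simpa only [natDegree_X_pow] using congrArg natDegree (RatFunc.algebraMap_injective K h)

theorem cp_generator_annihilates_parity_general (s : ℕ) (m : ℕ) (hm : m < s) :
    (∀ t : ℕ,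
      ∑ j ∈ Finset.range s, (RatFunc.X : RatFunc ℝ) ^ (m * j) *
          ∏ ℓ ∈ (Finset.range s).erase j,
            (((RatFunc.X : RatFunc ℝ) ^ t - RatFunc.X ^ ℓ) /
              ((RatFunc.X : RatFunc ℝ) ^ j - RatFunc.X ^ ℓ)) =
        (RatFunc.X : RatFunc ℝ) ^ (m * t))
    ∧
    (∀ i : ℕ,
      ∑ j ∈ Finset.range s,
          (- ∏ ℓ ∈ (Finset.range s).erase j,
              (((RatFunc.X : RatFunc ℝ) ^ (s + i) - RatFunc.X ^ ℓ) /
                ((RatFunc.X : RatFunc ℝ) ^ j - RatFunc.X ^ ℓ))) *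
            (RatFunc.X : RatFunc ℝ) ^ (m * j) +
        (RatFunc.X : RatFunc ℝ) ^ (m * (s + i)) = 0) := by
  have interpolation (t : ℕ) :
      ∑ j ∈ Finset.range s, (RatFunc.X : RatFunc ℝ) ^ (m * j) *
          ∏ ℓ ∈ (Finset.range s).erase j,
            (((RatFunc.X : RatFunc ℝ) ^ t - RatFunc.X ^ ℓ) /
              ((RatFunc.X : RatFunc ℝ) ^ j - RatFunc.X ^ ℓ)) =
        (RatFunc.X : RatFunc ℝ) ^ (m * t) := by
    have hnodes := (RatFunc.X_pow_injective ℝ).injOn (s := Finset.range s)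
    simp_rw [pow_mul']
    exact Lagrange.sum_pow_mul_prod_div_eq_pow hnodes (by rwa [card_range]) _
  refine ⟨interpolation, fun i => ?_⟩
  simp only [neg_mul, sum_neg_distrib, mul_comm (∏ _ ∈ _, _), interpolation, neg_add_cancel]

/-- Lagrange interpolation at the nodes `X^0, …, X^(s-1)` in ℝ(X): for `m < s` and any `t`,
`∑_{j<s} X^(m j) ∏_{ℓ ≠ j} (X^t - X^ℓ)/(X^j - X^ℓ) = X^(m t)`.  In particular, with
`Z i j = -∏_{ℓ ≠ j} (X^(s+i) - X^ℓ)/(X^j - X^ℓ)`, one has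
`∑_{j<s} Z i j · X^(m j) + X^(m (s+i)) = 0` for all `i`, i.e. the systematic generator matrix
`G = [Z  I]` satisfies `G Hᵀ = 0`. -/
theorem cp_generator_annihilates_parity (s : ℕ) (hs : 1 ≤ s) (m : ℕ) (hm : m < s) :
    (∀ t : ℕ,
      ∑ j ∈ Finset.range s, (RatFunc.X : RatFunc ℝ) ^ (m * j) *
          ∏ ℓ ∈ (Finset.range s).erase j,
            (((RatFunc.X : RatFunc ℝ) ^ t - RatFunc.X ^ ℓ) /
              ((RatFunc.X : RatFunc ℝ) ^ j - RatFunc.X ^ ℓ)) =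
        (RatFunc.X : RatFunc ℝ) ^ (m * t))
    ∧
    (∀ i : ℕ,
      ∑ j ∈ Finset.range s,
          (- ∏ ℓ ∈ (Finset.range s).erase j,
              (((RatFunc.X : RatFunc ℝ) ^ (s + i) - RatFunc.X ^ ℓ) /
                ((RatFunc.X : RatFunc ℝ) ^ j - RatFunc.X ^ ℓ))) *
            (RatFunc.X : RatFunc ℝ) ^ (m * j) +
        (RatFunc.X : RatFunc ℝ) ^ (m * (s + i)) = 0) :=
  cp_generator_annihilates_parity_general s m hm
end

section
/- Let n ≥ 1 and 1 ≤ s ≤ n. Suppose c, c' : ℤ × {0,…,n−1} → ℝ satisfy c(i,j) = 0 and c'(i,j) = 0 whenever i < 0, and both satisfy the geometric constraints ∑_{j=0}^{n−1} c(i − m·j, j) = 0 and ∑_{j=0}^{n−1} c'(i − m·j, j) = 0 for every i ∈ ℤ and every m ∈ {0, 1, …, s−1}. If S ⊆ {0,…,n−1} with |S| ≤ s and c(i,j) = c'(i,j) for all i ∈ ℤ and all j ∉ S, then c = c'. (That is, the symbols of any at most s erased columns of a CP(n, n−s) codeword are uniquely determined by the remaining columns.) -/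
/-!
Encode column `j` of a codeword as the power series `D_j = ∑ᵢ c(i, j) Xⁱ`. Since the symbols vanish
at negative indices, the constraint of slope `m` says exactly that `∑ⱼ (Xʲ)ᵐ D_j = 0`. For the
difference of two codewords agreeing outside `S`, only the columns in `S` survive, and these
`|S| ≤ s` equations form a Vandermonde system in the distinct nodes `Xʲ` over the domain `R⟦X⟧`,
so all `D_j` vanish.
-/

open Finset PowerSeries

theorem Finset.eq_zero_of_forall_sum_mul_pow_eq_zero {R ι : Type*} [CommRing R] [IsDomain R]
    {S : Finset ι} {f v : ι → R} (hf : Set.InjOn f S)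
    (hfv : ∀ m < #S, ∑ j ∈ S, v j * f j ^ m = 0) : ∀ j ∈ S, v j = 0 := by
  set e := S.equivFin
  have hinj : Function.Injective fun k => f (e.symm k) := fun k l hkl =>
    e.symm.injective (Subtype.ext (hf (e.symm k).2 (e.symm l).2 hkl))
  have hzero := Matrix.eq_zero_of_forall_pow_sum_mul_pow_eq_zero (v := fun k => v (e.symm k)) hinj
    fun m => calc
      ∑ k, v (e.symm k) * f (e.symm k) ^ (m : ℕ) = ∑ j : S, v j * f j ^ (m : ℕ) :=
        e.symm.sum_comp fun j : S => v j * f j ^ (m : ℕ)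
      _ = ∑ j ∈ S, v j * f j ^ (m : ℕ) :=
        Finset.sum_coe_sort S fun j => v j * f j ^ (m : ℕ)
      _ = 0 := hfv m m.isLt
  intro j hj
  simpa using congrFun hzero (e ⟨j, hj⟩)

variable {R : Type*} [CommRing R] {n s : ℕ}

structure IsCPCodeword (s : ℕ) (c : ℤ → Fin n → R) : Prop where
  eq_zero_of_neg : ∀ i < 0, ∀ j, c i j = 0
  sum_eq_zero : ∀ i, ∀ m < s, ∑ j : Fin n, c (i - (m : ℤ) * ((j : ℕ) : ℤ)) j = 0

theorem IsCPCodeword.sub {c c' : ℤ → Fin n → R} (hc : IsCPCodeword s c)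
    (hc' : IsCPCodeword s c') : IsCPCodeword s (c - c') where
  eq_zero_of_neg i hi j := by
    simp [hc.eq_zero_of_neg i hi j, hc'.eq_zero_of_neg i hi j]
  sum_eq_zero i m hm := by
    simp [Finset.sum_sub_distrib, hc.sum_eq_zero i m hm, hc'.sum_eq_zero i m hm]

def columnSeries (c : ℤ → Fin n → R) (j : Fin n) : R⟦X⟧ :=
  PowerSeries.mk fun i => c i j

theorem columnSeries_eq_zero_iff {c : ℤ → Fin n → R} {j : Fin n} (hc0 : ∀ i < 0, c i j = 0) :
    columnSeries c j = 0 ↔ ∀ i, c i j = 0 := by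
  refine ⟨fun h i => ?_, fun h => by ext I; simp [columnSeries, h]⟩
  obtain hi | hi := lt_or_ge i 0
  · exact hc0 i hi
  · simpa [columnSeries, Int.toNat_of_nonneg hi] using congrArg (coeff i.toNat) h

theorem coeff_X_pow_mul_columnSeries {c : ℤ → Fin n → R} {j : Fin n}
    (hc0 : ∀ i < 0, c i j = 0) (k I : ℕ) :
    coeff I (X ^ k * columnSeries c j) = c ((I : ℤ) - k) j := by
  rw [coeff_X_pow_mul']
  split_ifs with h
  · simp [columnSeries, Nat.cast_sub h]
  · exact (hc0 _ (by omega)).symm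

theorem IsCPCodeword.sum_columnSeries_mul_pow_eq_zero {c : ℤ → Fin n → R}
    (hc : IsCPCodeword s c) {m : ℕ} (hm : m < s) :
    ∑ j : Fin n, columnSeries c j * (X ^ (j : ℕ)) ^ m = 0 := by
  ext I
  simp_rw [map_sum, map_zero, ← pow_mul, mul_comm _ m, mul_comm (columnSeries c _),
    coeff_X_pow_mul_columnSeries (fun i hi => hc.eq_zero_of_neg i hi _)]
  exact_mod_cast hc.sum_eq_zero I m hm

theorem IsCPCodeword.eq_zero_of_forall_notMem [IsDomain R] {c : ℤ → Fin n → R}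
    (hc : IsCPCodeword s c) {S : Finset (Fin n)} (hS : #S ≤ s)
    (hcS : ∀ i, ∀ j ∉ S, c i j = 0) : c = 0 := by
  have hc0 (j : Fin n) : ∀ i < 0, c i j = 0 := fun i hi => hc.eq_zero_of_neg i hi j
  have hcol_notMem : ∀ j ∉ S, columnSeries c j = 0 := fun j hj =>
    (columnSeries_eq_zero_iff (hc0 j)).mpr fun i => hcS i j hj
  have hcol_mem : ∀ j ∈ S, columnSeries c j = 0 := by
    refine Finset.eq_zero_of_forall_sum_mul_pow_eq_zero
      (v := columnSeries c) (f := fun j : Fin n => X ^ (j : ℕ)) ?_ fun m hm => ?_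
    · intro j _ k _ hjk
      simpa [Fin.val_inj] using congrArg order hjk
    · rw [Finset.sum_subset (Finset.subset_univ S) fun j _ hj => by simp [hcol_notMem j hj]]
      exact hc.sum_columnSeries_mul_pow_eq_zero (hm.trans_le hS)
  funext i j
  by_cases hj : j ∈ S
  · exact (columnSeries_eq_zero_iff (hc0 j)).mp (hcol_mem j hj) i
  · exact hcS i j hj

theorem cp_code_erasure_recovery_general (n s : ℕ)
    (c c' : ℤ → Fin n → ℝ)
    (hc0 : ∀ i : ℤ, i < 0 → ∀ j : Fin n, c i j = 0)
    (hc'0 : ∀ i : ℤ, i < 0 → ∀ j : Fin n, c' i j = 0)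
    (hc : ∀ i : ℤ, ∀ m : ℕ, m < s →
      ∑ j : Fin n, c (i - (m : ℤ) * ((j : ℕ) : ℤ)) j = 0)
    (hc' : ∀ i : ℤ, ∀ m : ℕ, m < s →
      ∑ j : Fin n, c' (i - (m : ℤ) * ((j : ℕ) : ℤ)) j = 0)
    (S : Finset (Fin n)) (hS : S.card ≤ s)
    (hagree : ∀ i : ℤ, ∀ j : Fin n, j ∉ S → c i j = c' i j) :
    c = c' := by
  have hdiff : IsCPCodeword s (c - c') := IsCPCodeword.sub ⟨hc0, hc⟩ ⟨hc'0, hc'⟩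
  refine sub_eq_zero.mp (hdiff.eq_zero_of_forall_notMem hS fun i j hj => ?_)
  simp [hagree i j hj]

/-- Erasure recovery for the `CP(n, n-s)` code: if two codewords (families of real sequences
indexed by `ℤ × Fin n`, vanishing at negative indices and satisfying the geometric constraints
`∑_{j<n} c(i - m j, j) = 0` for all `i ∈ ℤ` and all slopes `m < s`) agree on all columns outside
a set `S` of at most `s` columns, then they are equal. -/
theorem cp_code_erasure_recovery (n s : ℕ) (hn : 1 ≤ n) (hs : 1 ≤ s) (hsn : s ≤ n)
    (c c' : ℤ → Fin n → ℝ)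
    (hc0 : ∀ i : ℤ, i < 0 → ∀ j : Fin n, c i j = 0)
    (hc'0 : ∀ i : ℤ, i < 0 → ∀ j : Fin n, c' i j = 0)
    (hc : ∀ i : ℤ, ∀ m : ℕ, m < s →
      ∑ j : Fin n, c (i - (m : ℤ) * ((j : ℕ) : ℤ)) j = 0)
    (hc' : ∀ i : ℤ, ∀ m : ℕ, m < s →
      ∑ j : Fin n, c' (i - (m : ℤ) * ((j : ℕ) : ℤ)) j = 0)
    (S : Finset (Fin n)) (hS : S.card ≤ s)
    (hagree : ∀ i : ℤ, ∀ j : Fin n, j ∉ S → c i j = c' i j) :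
    c = c' :=
  cp_code_erasure_recovery_general n s c c' hc0 hc'0 hc hc' S hS hagree
end

section
/- Let n ≥ 1, 2 ≤ s ≤ n, and let S = {t_0 < t_1 < ⋯ < t_{s−1}} ⊆ {0,…,n−1} be a set of s straggler columns. Suppose c : ℤ × {0,…,n−1} → ℝ satisfies c(i,j) = 0 for i < 0 and the slope-(s−1) constraint ∑_{j=0}^{n−1} c(i − (s−1)j, j) = 0 for all i ∈ ℤ. Then for every α with 0 ≤ α ≤ (s−1)(t_1 − t_0) − 1: (a) for every q ∈ {1,…,s−1}, α + (s−1)(t_0 − t_q) < 0, hence c(α + (s−1)(t_0 − t_q), t_q) = 0; and (b) c(α, t_0) = − ∑_{j ∉ S} c(α + (s−1)(t_0 − j), j), i.e., the first (s−1)(t_1 − t_0) symbols of column t_0 are each determined by symbols of non-straggler columns alone. -/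
/-!
Read the slope-`(s-1)` constraint along the line through
`(α, t₀)`: column `j` contributes the symbol at row `α + (s-1)(t₀ - j)`. For every other
straggler `t_q` we have `t_q ≥ t₁`, so that row is below `α - (s-1)(t₁ - t₀) < 0` and the
symbol vanishes. The only unknown left on the line is `c(α, t₀)`, which the constraint
then expresses through the non-straggler columns.
-/

open Finset

theorem Finset.eq_neg_sum_filter_notMem_of_sum_eq_zero {ι M : Type*} [Fintype ι]
    [DecidableEq ι] [AddCommGroup M] {f : ι → M} {S : Finset ι} {a : ι} (ha : a ∈ S)
    (hS : ∀ b ∈ S, b ≠ a → f b = 0) (hsum : ∑ i, f i = 0) :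
    f a = -∑ i ∈ univ.filter (fun i => i ∉ S), f i := by
  have hS_sum : ∑ i ∈ univ.filter (fun i => i ∈ S), f i = f a := by
    rw [filter_mem_eq_inter, univ_inter]
    exact sum_eq_single_of_mem a ha hS
  rw [← sum_filter_add_sum_filter_not univ (fun i => i ∈ S), hS_sum] at hsum
  exact eq_neg_of_add_eq_zero_left hsum

namespace CPCode

variable {n : ℕ} {R : Type*} [AddCommGroup R]

theorem sum_line_eq_zero (m : ℤ) {c : ℤ → Fin n → R}
    (hconstr : ∀ i : ℤ, ∑ j : Fin n, c (i - m * ((j : ℕ) : ℤ)) j = 0) (β : ℤ) (j₀ : Fin n) :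
    ∑ j : Fin n, c (β + m * (((j₀ : ℕ) : ℤ) - ((j : ℕ) : ℤ))) j = 0 := by
  simpa only [mul_sub, add_sub_assoc'] using hconstr (β + m * j₀)

theorem eq_neg_sum_line_of_vanish (m : ℤ) {c : ℤ → Fin n → R}
    (hconstr : ∀ i : ℤ, ∑ j : Fin n, c (i - m * ((j : ℕ) : ℤ)) j = 0) {S : Finset (Fin n)}
    {j₀ : Fin n} (hj₀ : j₀ ∈ S) (β : ℤ)
    (hS : ∀ j ∈ S, j ≠ j₀ → c (β + m * (((j₀ : ℕ) : ℤ) - ((j : ℕ) : ℤ))) j = 0) :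
    c β j₀ = -∑ j ∈ univ.filter (fun j => j ∉ S),
      c (β + m * (((j₀ : ℕ) : ℤ) - ((j : ℕ) : ℤ))) j := by
  have h := eq_neg_sum_filter_notMem_of_sum_eq_zero hj₀ hS (sum_line_eq_zero m hconstr β j₀)
  rwa [sub_self, mul_zero, add_zero] at h

end CPCode

/-- Phase 0 of the peeling decoder for the `CP(n, n-s)` code.  Let `t 0 < t 1 < ⋯ < t (s-1)`
be the straggler columns.  If `c` vanishes at negative row indices and satisfies the
slope-`(s-1)` constraint `∑_{j<n} c(i - (s-1) j, j) = 0` for every `i ∈ ℤ`, then for every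
`α` with `0 ≤ α ≤ (s-1)(t 1 - t 0) - 1`:
(a) for every `q ∈ {1, …, s-1}` the index `α + (s-1)(t 0 - t q)` is negative, hence the
corresponding symbol vanishes; and
(b) `c(α, t 0)` equals minus the sum of the symbols `c(α + (s-1)(t 0 - j), j)` over the
non-straggler columns `j`, i.e. it is determined by non-straggler columns alone. -/
theorem cp_peeling_decoder_phase_zero (n s : ℕ) (hs : 2 ≤ s)
    (t : Fin s → Fin n) (ht : StrictMono t)
    (c : ℤ → Fin n → ℝ)
    (hc0 : ∀ i : ℤ, i < 0 → ∀ j : Fin n, c i j = 0)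
    (hconstr : ∀ i : ℤ,
      ∑ j : Fin n, c (i - ((s : ℤ) - 1) * ((j : ℕ) : ℤ)) j = 0)
    (α : ℤ)
    (hα1 : α ≤ ((s : ℤ) - 1) *
      (((t ⟨1, by omega⟩ : Fin n) : ℤ) - ((t ⟨0, by omega⟩ : Fin n) : ℤ)) - 1) :
    (∀ q : Fin s, 1 ≤ (q : ℕ) →
      α + ((s : ℤ) - 1) *
          (((t ⟨0, by omega⟩ : Fin n) : ℤ) - ((t q : Fin n) : ℤ)) < 0 ∧
        c (α + ((s : ℤ) - 1) *
          (((t ⟨0, by omega⟩ : Fin n) : ℤ) - ((t q : Fin n) : ℤ))) (t q) = 0)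
    ∧
    c α (t ⟨0, by omega⟩) =
      - ∑ j ∈ Finset.univ.filter (fun j : Fin n => j ∉ Finset.image t Finset.univ),
          c (α + ((s : ℤ) - 1) *
            (((t ⟨0, by omega⟩ : Fin n) : ℤ) - ((j : ℕ) : ℤ))) j := by
  have hm : (0 : ℤ) ≤ (s : ℤ) - 1 := by omega
  have hneg : ∀ q : Fin s, 1 ≤ (q : ℕ) →
      α + ((s : ℤ) - 1) * (((t ⟨0, by omega⟩ : Fin n) : ℤ) - ((t q : Fin n) : ℤ)) < 0 := by
    intro q hq
    have ht₁q : ((t ⟨1, by omega⟩ : ℕ) : ℤ) ≤ (t q : ℕ) := by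
      exact_mod_cast ht.monotone (Fin.mk_le_of_le_val hq)
    nlinarith
  refine ⟨fun q hq => ⟨hneg q hq, hc0 _ (hneg q hq) _⟩, ?_⟩
  refine CPCode.eq_neg_sum_line_of_vanish _ hconstr (mem_image_of_mem t (mem_univ _)) α ?_
  rintro _ hj hne
  obtain ⟨q, -, rfl⟩ := mem_image.mp hj
  have hq : q ≠ ⟨0, by omega⟩ := fun h => hne (congrArg t h)
  exact hc0 _ (hneg q (Nat.one_le_iff_ne_zero.mpr (Fin.val_ne_iff.mpr hq))) _
end
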